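/- arXiv:1206.4389 — 2 statements merged into one kernel-verified Lean document; each statement's English description precedes it below -/
import Mathlib

section
/- Let μ₁, μ₂ > 0 and for E > 0 let z₁ ~ N(μ₁√E, 1) and z₂ ~ N(μ₂√E, 1) be independent Gaussian random variables. Define Λ₁(E) = P(z₁ + z₂ > 0, z₁ > 0, z₂ < 0) and Λ₂(E) = P(z₁ + z₂ < 0, z₁ > 0, z₂ < 0). Then Λ₁(E)/Λ₂(E) → ∞ as E → ∞. -/
open Filter MeasureTheory ProbabilityTheory Real Set

/-! With `a = μ₁ √E` and `b = μ₂ √E`, the rectangle `(a + 1, a + 2) × (-1, 0)` lies in the event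
of `Λ₁`, so `Λ₁ ≳ exp (-(b + 1)² / 2)`. On the event of `Λ₂` we have `0 < z₁ < -z₂`, hence
`-p z₁ - b z₂ ≥ 0` for `p = min a b`, and the Chernoff bound for this linear form gives
`Λ₂ ≤ exp (-p² / 2 - b² / 2)`. The ratio is therefore at least a constant times
`exp (p² / 2 - b - 1 / 2)`, where `p²` grows like `E` but `b` only like `√E`. -/

noncomputable abbrev gaussianPair (a b : ℝ) : Measure (ℝ × ℝ) :=
  (gaussianReal a 1).prod (gaussianReal b 1)

noncomputable def Λ₁ (a b : ℝ) : ℝ :=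
  (gaussianPair a b).real {z | z.1 + z.2 > 0 ∧ z.1 > 0 ∧ z.2 < 0}

noncomputable def Λ₂ (a b : ℝ) : ℝ :=
  (gaussianPair a b).real {z | z.1 + z.2 < 0 ∧ z.1 > 0 ∧ z.2 < 0}

lemma isOpenPosMeasure_gaussianReal (m : ℝ) {v : NNReal} (hv : v ≠ 0) :
    (gaussianReal m v).IsOpenPosMeasure :=
  (gaussianReal_absolutelyContinuous' m hv).isOpenPosMeasure

lemma Λ₂_pos (a b : ℝ) : 0 < Λ₂ a b := by
  have := isOpenPosMeasure_gaussianReal a one_ne_zero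
  have := isOpenPosMeasure_gaussianReal b one_ne_zero
  have hopen : IsOpen {z : ℝ × ℝ | z.1 + z.2 < 0 ∧ z.1 > 0 ∧ z.2 < 0} :=
    (isOpen_lt (continuous_fst.add continuous_snd) continuous_const).inter
      ((isOpen_lt continuous_const continuous_fst).inter (isOpen_lt continuous_snd continuous_const))
  exact ENNReal.toReal_pos (hopen.measure_pos _ ⟨(1, -2), by norm_num⟩).ne' (measure_ne_top _ _)

lemma gaussianPDFReal_zero_one (x : ℝ) :
    gaussianPDFReal 0 1 x = (√(2 * π))⁻¹ * exp (-x ^ 2 / 2) := by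
  simp [gaussianPDFReal]

lemma volume_real_mul_le_gaussianReal_real (m M : ℝ) {s : Set ℝ} (hs : ∀ x ∈ s, |x - m| ≤ M) :
    volume.real s * gaussianPDFReal 0 1 M ≤ (gaussianReal m 1).real s := by
  have hpdf : ∀ x ∈ s, ENNReal.ofReal (gaussianPDFReal 0 1 M) ≤ gaussianPDF m 1 x := by
    intro x hx
    refine ENNReal.ofReal_le_ofReal ?_
    obtain ⟨hl, hr⟩ := abs_le.mp (hs x hx)
    simp only [gaussianPDFReal, NNReal.coe_one, mul_one, sub_zero]
    gcongr 2
    linarith [sq_le_sq' hl hr]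
  have hle : ENNReal.ofReal (gaussianPDFReal 0 1 M) * volume s ≤ gaussianReal m 1 s := by
    rw [gaussianReal_apply m one_ne_zero, ← setLIntegral_const]
    exact setLIntegral_mono (measurable_gaussianPDF m 1) hpdf
  have := ENNReal.toReal_mono (measure_ne_top _ _) hle
  rwa [ENNReal.toReal_mul, ENNReal.toReal_ofReal (gaussianPDFReal_nonneg _ _ _), mul_comm] at this

lemma mul_gaussianPDFReal_le_Λ₁ (a b : ℝ) (ha : 0 ≤ a) (hb : 0 ≤ b) :
    gaussianPDFReal 0 1 2 * gaussianPDFReal 0 1 (b + 1) ≤ Λ₁ a b := by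
  have hsub : Ioo (a + 1) (a + 2) ×ˢ Ioo (-1 : ℝ) 0 ⊆ {z | z.1 + z.2 > 0 ∧ z.1 > 0 ∧ z.2 < 0} := by
    rintro ⟨x, y⟩ ⟨⟨hx, -⟩, ⟨hy, hy'⟩⟩
    exact ⟨by dsimp only; linarith, by dsimp only; linarith, hy'⟩
  have h₁ := volume_real_mul_le_gaussianReal_real a 2 (s := Ioo (a + 1) (a + 2))
    fun x hx ↦ abs_le.mpr ⟨by linarith [hx.1], by linarith [hx.2]⟩
  have h₂ := volume_real_mul_le_gaussianReal_real b (b + 1) (s := Ioo (-1) 0)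
    fun x hx ↦ abs_le.mpr ⟨by linarith [hx.1], by linarith [hx.2]⟩
  rw [Real.volume_real_Ioo_of_le (by linarith), show a + 2 - (a + 1) = 1 by ring, one_mul] at h₁
  rw [Real.volume_real_Ioo_of_le (by norm_num), show (0 : ℝ) - -1 = 1 by norm_num, one_mul] at h₂
  calc gaussianPDFReal 0 1 2 * gaussianPDFReal 0 1 (b + 1)
      ≤ (gaussianReal a 1).real (Ioo (a + 1) (a + 2)) * (gaussianReal b 1).real (Ioo (-1) 0) :=
        mul_le_mul h₁ h₂ (gaussianPDFReal_nonneg _ _ _) measureReal_nonneg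
    _ = (gaussianPair a b).real (Ioo (a + 1) (a + 2) ×ˢ Ioo (-1 : ℝ) 0) :=
        (measureReal_prod_prod _ _).symm
    _ ≤ Λ₁ a b := measureReal_mono hsub

lemma integral_exp_gaussianPair (a b s t : ℝ) :
    ∫ z, exp (s * z.1 + t * z.2) ∂gaussianPair a b
      = exp (a * s + s ^ 2 / 2) * exp (b * t + t ^ 2 / 2) := by
  simp_rw [exp_add]
  rw [gaussianPair, integral_prod_mul (fun x ↦ exp (s * x)) (fun y ↦ exp (t * y))]
  change mgf id (gaussianReal a 1) s * mgf id (gaussianReal b 1) t = _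
  simp only [mgf_id_gaussianReal, NNReal.coe_one, one_mul, exp_add]

lemma integrable_exp_gaussianPair (a b s t : ℝ) :
    Integrable (fun z : ℝ × ℝ ↦ exp (s * z.1 + t * z.2)) (gaussianPair a b) := by
  simp_rw [exp_add]
  exact (integrable_exp_mul_gaussianReal s).mul_prod (integrable_exp_mul_gaussianReal t)

lemma Λ₂_le_exp (a b : ℝ) (ha : 0 ≤ a) (hb : 0 ≤ b) :
    Λ₂ a b ≤ exp (-min a b ^ 2 / 2 - b ^ 2 / 2) := by
  set p := min a b
  have hsub : {z : ℝ × ℝ | z.1 + z.2 < 0 ∧ z.1 > 0 ∧ z.2 < 0} ⊆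
      {z | 0 ≤ -p * z.1 + -b * z.2} := by
    rintro z ⟨hsum, hpos, -⟩
    have hpb : p ≤ b := min_le_right a b
    simp only [mem_ofPred_eq]
    nlinarith
  have hchernoff := measure_ge_le_exp_mul_mgf (μ := gaussianPair a b)
    (X := fun z ↦ -p * z.1 + -b * z.2) 0 zero_le_one
    (by simpa using integrable_exp_gaussianPair a b (-p) (-b))
  simp only [mgf, one_mul, mul_zero, exp_zero, integral_exp_gaussianPair] at hchernoff
  calc Λ₂ a b ≤ _ := measureReal_mono hsub
    _ ≤ _ := hchernoff
    _ ≤ _ := by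
      rw [← exp_add]
      gcongr
      nlinarith [min_le_left a b, le_min ha hb]

lemma tendsto_Λ₁_div_Λ₂ {μ₁ μ₂ : ℝ} (h₁ : 0 < μ₁) (h₂ : 0 < μ₂) :
    Tendsto (fun x ↦ Λ₁ (μ₁ * x) (μ₂ * x) / Λ₂ (μ₁ * x) (μ₂ * x)) atTop atTop := by
  set κ := min μ₁ μ₂
  set C := gaussianPDFReal 0 1 2 * (√(2 * π))⁻¹
  have hC : 0 < C := mul_pos (gaussianPDFReal_pos _ _ _ one_ne_zero) (by positivity)
  have hexponent : Tendsto (fun x ↦ x * (κ ^ 2 / 2 * x - μ₂) - 1 / 2) atTop atTop :=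
    tendsto_atTop_add_const_right _ _ <| tendsto_id.atTop_mul_atTop₀ <|
      tendsto_atTop_add_const_right _ _ <| tendsto_id.const_mul_atTop (by positivity)
  refine tendsto_atTop_mono' _ ?_ ((tendsto_exp_atTop.comp hexponent).const_mul_atTop hC)
  filter_upwards [eventually_ge_atTop 0] with x hx
  have ha : 0 ≤ μ₁ * x := by positivity
  have hb : 0 ≤ μ₂ * x := by positivity
  rw [Function.comp_apply]
  calc C * exp (x * (κ ^ 2 / 2 * x - μ₂) - 1 / 2)
      = gaussianPDFReal 0 1 2 * gaussianPDFReal 0 1 (μ₂ * x + 1)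
        / exp (-min (μ₁ * x) (μ₂ * x) ^ 2 / 2 - (μ₂ * x) ^ 2 / 2) := by
        rw [gaussianPDFReal_zero_one (μ₂ * x + 1), ← min_mul_of_nonneg _ _ hx, mul_div_assoc,
          mul_div_assoc, ← exp_sub]
        simp only [C, κ]
        ring_nf
    _ ≤ _ := div_le_div₀ measureReal_nonneg (mul_gaussianPDFReal_le_Λ₁ _ _ ha hb) (Λ₂_pos _ _)
        (Λ₂_le_exp _ _ ha hb)

theorem stmt_5 (μ₁ μ₂ : ℝ) (h₁ : 0 < μ₁) (h₂ : 0 < μ₂) :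
    Tendsto (fun E : ℝ =>
        (((gaussianReal (μ₁ * Real.sqrt E) 1).prod (gaussianReal (μ₂ * Real.sqrt E) 1))
            {z : ℝ × ℝ | z.1 + z.2 > 0 ∧ z.1 > 0 ∧ z.2 < 0}).toReal /
        (((gaussianReal (μ₁ * Real.sqrt E) 1).prod (gaussianReal (μ₂ * Real.sqrt E) 1))
            {z : ℝ × ℝ | z.1 + z.2 < 0 ∧ z.1 > 0 ∧ z.2 < 0}).toReal)
      atTop atTop :=
  (tendsto_Λ₁_div_Λ₂ h₁ h₂).comp tendsto_sqrt_atTop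
end

section
/- With β'_k(p) as defined (the probability that a Bernoulli(p)^n error vector is within Hamming distance t of a fixed weight-k vector), as p → 0⁺ and for k ≥ 2t+1, β'_k(p) / p^{k−t} → C(k, t); in particular for k = 2t+1, β'_{2t+1}(p) ~ C(2t+1, t)·p^{t+1}. -/
open Filter Topology Finset

/-!
For `m ≤ t` every exponent `k - m + 2j` is at least `k - t`, so dividing `β'_k(p)` by
`p^(k-t)` leaves a polynomial in `p`. Its value at `0` keeps only the term with
`m = t`, `j = 0`, which is `C(k, t)`.
-/

/-- `m` is the distance to the fixed weight-`k` word and `j` the number of positions outside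
its support where the two differ, so the error word has weight `k - m + 2j`. -/
noncomputable def betaPrime (n t k : ℕ) (p : ℝ) : ℝ :=
  ∑ m ∈ range (t + 1), ∑ j ∈ range (min m (n - k) + 1),
    (k.choose (m - j) : ℝ) * ((n - k).choose j : ℝ) *
      p ^ (k - m + 2 * j) * (1 - p) ^ (n - k + m - 2 * j)

noncomputable def betaPrimeReduced (n t k : ℕ) (p : ℝ) : ℝ :=
  ∑ m ∈ range (t + 1), ∑ j ∈ range (min m (n - k) + 1),
    (k.choose (m - j) : ℝ) * ((n - k).choose j : ℝ) *
      p ^ (t - m + 2 * j) * (1 - p) ^ (n - k + m - 2 * j)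

lemma betaPrime_div_pow_eq_betaPrimeReduced {n t k : ℕ} (htk : t ≤ k) {p : ℝ} (hp : p ≠ 0) :
    betaPrime n t k p / p ^ (k - t) = betaPrimeReduced n t k p := by
  rw [betaPrime, betaPrimeReduced, sum_div]
  refine sum_congr rfl fun m hm => ?_
  rw [sum_div]
  refine sum_congr rfl fun j _ => ?_
  have hmt : m ≤ t := mem_range_succ_iff.mp hm
  rw [show k - m + 2 * j = (k - t) + (t - m + 2 * j) by omega, pow_add]
  field_simp

lemma continuous_betaPrimeReduced (n t k : ℕ) : Continuous (betaPrimeReduced n t k) := by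
  unfold betaPrimeReduced
  fun_prop

lemma betaPrimeReduced_zero (n t k : ℕ) : betaPrimeReduced n t k 0 = k.choose t := by
  rw [betaPrimeReduced, sum_eq_single_of_mem t (self_mem_range_succ t)]
  · rw [sum_eq_single_of_mem 0 (by simp)]
    · simp
    · intro j _ hj
      simp [hj]
  · intro m hm hmt
    have hlt : m < t := lt_of_le_of_ne (mem_range_succ_iff.mp hm) hmt
    exact sum_eq_zero fun j _ => by simp [zero_pow (by omega : t - m + 2 * j ≠ 0)]

theorem stmt_14_general (n t k : ℕ) (hkt : 2 * t + 1 ≤ k) :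
    Tendsto (fun p : ℝ =>
        (∑ m ∈ Finset.range (t + 1), ∑ j ∈ Finset.range (min m (n - k) + 1),
          (k.choose (m - j) : ℝ) * ((n - k).choose j : ℝ) *
            p ^ (k - m + 2 * j) * (1 - p) ^ (n - k + m - 2 * j)) / p ^ (k - t))
      (𝓝[>] 0) (𝓝 (k.choose t : ℝ)) := by
  have hlim : Tendsto (betaPrimeReduced n t k) (𝓝[>] 0) (𝓝 (k.choose t : ℝ)) := by
    rw [← betaPrimeReduced_zero n t k]
    exact (continuous_betaPrimeReduced n t k).continuousWithinAt
  refine tendsto_nhdsWithin_congr (fun p hp => ?_) hlim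
  exact (betaPrime_div_pow_eq_betaPrimeReduced (by omega) (ne_of_gt hp)).symm

/-- with `β'_k(p)` the double-sum formula (the probability that a
Bernoulli(p)ⁿ error vector is within Hamming distance `t` of a fixed weight-`k`
vector), as `p → 0⁺`, `β'_k(p) / p^{k−t} → C(k, t)`. -/
theorem stmt_14 (n t k : ℕ) (hk : k ≤ n) (hkt : 2 * t + 1 ≤ k) :
    Tendsto (fun p : ℝ =>
        (∑ m ∈ Finset.range (t + 1), ∑ j ∈ Finset.range (min m (n - k) + 1),
          (k.choose (m - j) : ℝ) * ((n - k).choose j : ℝ) *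
            p ^ (k - m + 2 * j) * (1 - p) ^ (n - k + m - 2 * j)) / p ^ (k - t))
      (𝓝[>] 0) (𝓝 (k.choose t : ℝ)) :=
  stmt_14_general n t k hkt
end
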